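/- arXiv:2104.09589 — 4 statements merged into one kernel-verified Lean document; each statement's English description precedes it below -/
import Mathlib

section
/- Let v ∈ S_{2n} satisfy v(2n+1-i) = 2n+1-v(i) for all i. Then v is 123-avoiding if and only if there exist indices a_1 < a_2 < ... < a_n, each a left-to-right minimum of v, such that a_i + a_j ≠ 2n+1 for all i, j ∈ {1,...,n}. Moreover, in that case, setting b_i := 2n+1-a_{n+1-i}, the indices b_1 < ... < b_n are right-to-left maxima of v. -/
/-!
Under the symmetry `v ∘ rev = rev ∘ v`, `j` is a left-to-right minimum iff `rev j` is a
right-to-left maximum, and a permutation avoids 123 iff every index is a left-to-right minimum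
or a right-to-left maximum. So `v` avoids 123 iff each of the `n` pairs `{j, rev j}` contains a
left-to-right minimum: choosing one from each pair and sorting gives the `a i`, and conversely
`n` indices no two of which form such a pair meet every pair, by counting.
-/

/-- `v` is 123-avoiding: there are no indices `i < j < k` with `v i < v j < v k`. -/
def Avoids123 {m : ℕ} (v : Equiv.Perm (Fin m)) : Prop :=
  ¬ ∃ i j k : Fin m, i < j ∧ j < k ∧ v i < v j ∧ v j < v k

/-- `a` is a left-to-right minimum of `v`: `v i > v a` for all `i < a`. -/
def IsLtrMin {m : ℕ} (v : Equiv.Perm (Fin m)) (a : Fin m) : Prop :=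
  ∀ i, i < a → v a < v i

/-- `b` is a right-to-left maximum of `v`: `v k < v b` for all `k > b`. -/
def IsRtlMax {m : ℕ} (v : Equiv.Perm (Fin m)) (b : Fin m) : Prop :=
  ∀ k, b < k → v k < v b

lemma avoids123_iff_forall_isLtrMin_or_isRtlMax {m : ℕ} (v : Equiv.Perm (Fin m)) :
    Avoids123 v ↔ ∀ j, IsLtrMin v j ∨ IsRtlMax v j := by
  constructor
  · intro h j
    by_contra! hj
    simp only [IsLtrMin, IsRtlMax, not_forall, not_lt, exists_prop] at hj
    obtain ⟨⟨i, hij, hvi⟩, k, hjk, hvk⟩ := hj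
    exact h ⟨i, j, k, hij, hjk, hvi.lt_of_ne (v.injective.ne hij.ne),
      hvk.lt_of_ne (v.injective.ne hjk.ne)⟩
  · rintro h ⟨i, j, k, hij, hjk, hvij, hvjk⟩
    rcases h j with hj | hj
    · exact (hj i hij).asymm hvij
    · exact (hj k hjk).asymm hvjk

lemma isLtrMin_rev_iff {m : ℕ} {v : Equiv.Perm (Fin m)}
    (hv : ∀ i, v (Fin.rev i) = Fin.rev (v i)) (b : Fin m) :
    IsLtrMin v (Fin.rev b) ↔ IsRtlMax v b := by
  rw [IsLtrMin, ← Fin.revPerm.forall_congr_right]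
  simp only [Fin.revPerm_apply, hv, Fin.rev_lt_rev, IsRtlMax]

lemma Fin.rev_ne_self_of_even {n : ℕ} (j : Fin (2 * n)) : Fin.rev j ≠ j := by
  intro h
  have := congrArg Fin.val h
  rw [Fin.val_rev] at this
  omega

lemma Fin.exists_eq_or_rev_eq {n : ℕ} {a : Fin n → Fin (2 * n)} (ha : Function.Injective a)
    (hrev : ∀ i j, a i ≠ Fin.rev (a j)) (k : Fin (2 * n)) :
    ∃ i, a i = k ∨ Fin.rev (a i) = k := by
  have hbij : Function.Bijective (Sum.elim a (Fin.rev ∘ a)) :=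
    (Fintype.bijective_iff_injective_and_card _).mpr
      ⟨ha.sumElim (Fin.rev_injective.comp ha) hrev, by simp [two_mul]⟩
  obtain ⟨i | i, hi⟩ := hbij.surjective k
  · exact ⟨i, .inl hi⟩
  · exact ⟨i, .inr hi⟩

lemma Fin.exists_strictMono_of_forall_or_rev {n : ℕ} (P : Fin (2 * n) → Prop)
    (hP : ∀ j, P j ∨ P (Fin.rev j)) :
    ∃ a : Fin n → Fin (2 * n),
      StrictMono a ∧ (∀ i, P (a i)) ∧ ∀ i j, a i ≠ Fin.rev (a j) := by
  classical
  let e : Fin n → Fin (2 * n) := Fin.castLE (by omega)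
  let c : Fin n → Fin (2 * n) := fun i => if P (e i) then e i else Fin.rev (e i)
  have hc_val (i : Fin n) : (c i : ℕ) = i ∨ (c i : ℕ) = 2 * n - (i + 1) := by
    by_cases h : P (e i) <;> simp [c, e, h]
  have hc_P (i : Fin n) : P (c i) := by
    by_cases h : P (e i)
    · simp [c, h]
    · simpa [c, h] using (hP (e i)).resolve_left h
  have hc_rev (p q : Fin n) : c p ≠ Fin.rev (c q) := by
    intro h
    have hval := congrArg Fin.val h
    rw [Fin.val_rev] at hval
    obtain rfl : p = q := by
      rcases hc_val p with hp | hp <;> rcases hc_val q with hq | hq <;> (ext; omega)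
    exact Fin.rev_ne_self_of_even _ h.symm
  have hc_inj : Function.Injective c := fun p q h => by
    rcases hc_val p with hp | hp <;> rcases hc_val q with hq | hq <;> (ext; omega)
  let S := Finset.univ.image c
  have hS : S.card = n := by simp [S, Finset.card_image_of_injective _ hc_inj]
  have hS_mem (i : Fin n) : ∃ p, c p = S.orderEmbOfFin hS i := by
    obtain ⟨p, -, hp⟩ := Finset.mem_image.mp (S.orderEmbOfFin_mem hS i)
    exact ⟨p, hp⟩
  refine ⟨S.orderEmbOfFin hS, (S.orderEmbOfFin hS).strictMono, fun i => ?_, fun i j => ?_⟩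
  · obtain ⟨p, hp⟩ := hS_mem i
    exact hp ▸ hc_P p
  · obtain ⟨p, hp⟩ := hS_mem i
    obtain ⟨q, hq⟩ := hS_mem j
    exact hp ▸ hq ▸ hc_rev p q

/-- For `v ∈ S_{2n}` with `v(2n+1-i) = 2n+1-v(i)`: `v` is 123-avoiding iff there
exist increasing indices `a₁ < ⋯ < aₙ`, each a left-to-right minimum, with
`a_i + a_j ≠ 2n+1` (i.e. `a i ≠ rev (a j)`) for all `i, j`.  Moreover, in that case
the indices `b_i := 2n+1 - a_{n+1-i}` are increasing right-to-left maxima of `v`. -/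
theorem stmt4 (n : ℕ) (v : Equiv.Perm (Fin (2 * n)))
    (hv : ∀ i, v (Fin.rev i) = Fin.rev (v i)) :
    (Avoids123 v ↔ ∃ a : Fin n → Fin (2 * n), StrictMono a ∧
        (∀ i, IsLtrMin v (a i)) ∧ (∀ i j, a i ≠ Fin.rev (a j))) ∧
    (∀ a : Fin n → Fin (2 * n), StrictMono a →
        (∀ i, IsLtrMin v (a i)) → (∀ i j, a i ≠ Fin.rev (a j)) →
        StrictMono (fun i : Fin n => Fin.rev (a (Fin.rev i))) ∧
        ∀ i : Fin n, IsRtlMax v (Fin.rev (a (Fin.rev i)))) := by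
  have rtl_of_ltr (a : Fin (2 * n)) (h : IsLtrMin v a) : IsRtlMax v (Fin.rev a) :=
    (isLtrMin_rev_iff hv _).mp (by rwa [Fin.rev_rev])
  refine ⟨avoids123_iff_forall_isLtrMin_or_isRtlMax v |>.trans ⟨fun h => ?_, ?_⟩, ?_⟩
  · exact Fin.exists_strictMono_of_forall_or_rev _ fun j =>
      (h j).imp_right (isLtrMin_rev_iff hv j).mpr
  · rintro ⟨a, ha, ha_ltr, ha_rev⟩ j
    obtain ⟨i, rfl | rfl⟩ := Fin.exists_eq_or_rev_eq ha.injective ha_rev j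
    · exact .inl (ha_ltr i)
    · exact .inr (rtl_of_ltr _ (ha_ltr i))
  · intro a ha ha_ltr _
    exact ⟨Fin.rev_strictAnti.comp (ha.comp_strictAnti Fin.rev_strictAnti),
      fun i => rtl_of_ltr _ (ha_ltr _)⟩
end

section
/- Let w ∈ S_{2n} satisfy w(2n+1-i) = 2n+1-w(i) for all i, and define the type-A essential set E^A(w) = {(p,q) : 2 ≤ p ≤ 2n, 1 ≤ q ≤ 2n-1, w(q) < p ≤ w(q+1), and w^{-1}(p-1) ≤ q < w^{-1}(p)}. Then (p,q) ∈ E^A(w) implies (2n+2-p, 2n-q) ∈ E^A(w). -/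
/-!
The reflection `i ↦ 2n+1-i` commutes with `w`, hence also with `w⁻¹`. So under
`(p,q) ↦ (2n+2-p, 2n-q)` the four inequalities defining `E^A(w)` are permuted among themselves:
`w(q) < p` becomes `2n+2-p ≤ w(2n-q+1)`, `p ≤ w(q+1)` becomes `w(2n-q) < 2n+2-p`, and likewise
for the two conditions on `w⁻¹`.
-/

theorem Set.InvOn.map_comm {α : Type*} {s : Set α} {w winv σ : α → α}
    (hσ : Set.MapsTo σ s s) (hwinv : Set.MapsTo winv s s) (hinv : Set.InvOn winv w s s)
    (hcomm : ∀ i ∈ s, w (σ i) = σ (w i)) : ∀ j ∈ s, winv (σ j) = σ (winv j) := by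
  intro j hj
  calc winv (σ j) = winv (σ (w (winv j))) := by rw [hinv.2 hj]
    _ = winv (w (σ (winv j))) := by rw [hcomm _ (hwinv hj)]
    _ = σ (winv j) := hinv.1 (hσ (hwinv hj))

def IsEssentialA (m : ℕ) (w winv : ℕ → ℕ) (p q : ℕ) : Prop :=
  2 ≤ p ∧ p ≤ m ∧ 1 ≤ q ∧ q ≤ m - 1 ∧ w q < p ∧ p ≤ w (q + 1) ∧ winv (p - 1) ≤ q ∧ q < winv p

theorem isEssentialA_reflect {m : ℕ} {w winv : ℕ → ℕ}
    (hw : ∀ i ∈ Finset.Icc 1 m, w (m + 1 - i) = m + 1 - w i)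
    (hwinv : ∀ i ∈ Finset.Icc 1 m, winv (m + 1 - i) = m + 1 - winv i)
    {p q : ℕ} (h : IsEssentialA m w winv p q) :
    IsEssentialA m w winv (m + 2 - p) (m - q) := by
  obtain ⟨hp2, hpm, hq1, hqm, hwq, hwq1, hwinvp1, hwinvp⟩ := h
  have reflect : ∀ f : ℕ → ℕ, (∀ i ∈ Finset.Icc 1 m, f (m + 1 - i) = m + 1 - f i) →
      ∀ i j, 1 ≤ i → i ≤ m → i + j = m + 1 → f j = m + 1 - f i := by
    intro f hf i j hi1 him hij
    rw [← hf i (Finset.mem_Icc.2 ⟨hi1, him⟩), show m + 1 - i = j by omega]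
  have hA := reflect w hw (q + 1) (m - q) (by omega) (by omega) (by omega)
  have hB := reflect w hw q (m - q + 1) (by omega) (by omega) (by omega)
  have hC := reflect winv hwinv p (m + 2 - p - 1) (by omega) (by omega) (by omega)
  have hD := reflect winv hwinv (p - 1) (m + 2 - p) (by omega) (by omega) (by omega)
  refine ⟨?_, ?_, ?_, ?_, ?_, ?_, ?_, ?_⟩ <;> omega

theorem stmt7_general (n : ℕ) (w winv : ℕ → ℕ)
    (hwinvmem : ∀ i ∈ Finset.Icc 1 (2 * n), winv i ∈ Finset.Icc 1 (2 * n))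
    (hinv1 : ∀ i ∈ Finset.Icc 1 (2 * n), winv (w i) = i)
    (hinv2 : ∀ i ∈ Finset.Icc 1 (2 * n), w (winv i) = i)
    (hsym : ∀ i ∈ Finset.Icc 1 (2 * n), w (2 * n + 1 - i) = 2 * n + 1 - w i)
    (p q : ℕ)
    (h : 2 ≤ p ∧ p ≤ 2 * n ∧ 1 ≤ q ∧ q ≤ 2 * n - 1 ∧
      w q < p ∧ p ≤ w (q + 1) ∧ winv (p - 1) ≤ q ∧ q < winv p) :
    2 ≤ 2 * n + 2 - p ∧ 2 * n + 2 - p ≤ 2 * n ∧ 1 ≤ 2 * n - q ∧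
      2 * n - q ≤ 2 * n - 1 ∧
      w (2 * n - q) < 2 * n + 2 - p ∧ 2 * n + 2 - p ≤ w (2 * n - q + 1) ∧
      winv (2 * n + 2 - p - 1) ≤ 2 * n - q ∧ 2 * n - q < winv (2 * n + 2 - p) := by
  have hreflect : Set.MapsTo (fun i => 2 * n + 1 - i) (Finset.Icc 1 (2 * n) : Set ℕ)
      (Finset.Icc 1 (2 * n)) := by
    intro i hi
    simp only [Finset.coe_Icc, Set.mem_Icc] at hi ⊢
    omega
  have hsyminv := Set.InvOn.map_comm hreflect hwinvmem
    ⟨hinv1, hinv2⟩ hsym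
  exact isEssentialA_reflect hsym hsyminv h

/-- For a permutation `w` of `{1,…,2n}` (modelled as a function `w : ℕ → ℕ`
bijective on `Icc 1 (2n)` with inverse `winv` there) satisfying the type-C
symmetry `w(2n+1-i) = 2n+1-w(i)`, the type-A essential set
`E^A(w) = {(p,q) : 2 ≤ p ≤ 2n, 1 ≤ q ≤ 2n-1, w(q) < p ≤ w(q+1),
w⁻¹(p-1) ≤ q < w⁻¹(p)}` is closed under `(p,q) ↦ (2n+2-p, 2n-q)`. -/
theorem stmt7 (n : ℕ) (hn : 1 ≤ n) (w winv : ℕ → ℕ)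
    (hwmem : ∀ i ∈ Finset.Icc 1 (2 * n), w i ∈ Finset.Icc 1 (2 * n))
    (hwinvmem : ∀ i ∈ Finset.Icc 1 (2 * n), winv i ∈ Finset.Icc 1 (2 * n))
    (hinv1 : ∀ i ∈ Finset.Icc 1 (2 * n), winv (w i) = i)
    (hinv2 : ∀ i ∈ Finset.Icc 1 (2 * n), w (winv i) = i)
    (hsym : ∀ i ∈ Finset.Icc 1 (2 * n), w (2 * n + 1 - i) = 2 * n + 1 - w i)
    (p q : ℕ)
    (h : 2 ≤ p ∧ p ≤ 2 * n ∧ 1 ≤ q ∧ q ≤ 2 * n - 1 ∧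
      w q < p ∧ p ≤ w (q + 1) ∧ winv (p - 1) ≤ q ∧ q < winv p) :
    2 ≤ 2 * n + 2 - p ∧ 2 * n + 2 - p ≤ 2 * n ∧ 1 ≤ 2 * n - q ∧
      2 * n - q ≤ 2 * n - 1 ∧
      w (2 * n - q) < 2 * n + 2 - p ∧ 2 * n + 2 - p ≤ w (2 * n - q + 1) ∧
      winv (2 * n + 2 - p - 1) ≤ 2 * n - q ∧ 2 * n - q < winv (2 * n + 2 - p) :=
  stmt7_general n w winv hwinvmem hinv1 hinv2 hsym p q h
end

section
/- Let r ≥ 1, let {x_{ij} : 1 ≤ i ≤ j ≤ r} be independent commuting indeterminates, and let N be the r×r 'generic symmetric matrix' with N_{ij} = x_{min(i,j), max(i,j)}. Then every nonzero coefficient of the polynomial det(N) ∈ ℤ[x_{ij}] is of the form ±2^k for some k ≥ 0. In particular, every monomial of the form ∏_{j=1}^r N_{j, u(j)} for u ∈ S_r appears in det(N) with nonzero coefficient. -/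
/-!
In the Leibniz expansion the term of `σ` is `sign σ` times a monomial determined by the multiset
of unordered pairs `{j, σ j}`. Two permutations give the same multiset exactly when one arises
from the other by reversing some of its cycles. Reversing a cycle of length at most two changes
nothing, and reversing cycles never changes the sign. So the coefficient of the monomial of `τ` is
`sign τ * 2 ^ c`, where `c`, the number of cycles of `τ` of length at least three, is the dimension
of the `𝔽₂`-space of such choices.
-/

open Finset MvPolynomial

namespace Equiv.Perm

variable {α : Type*}

section reverseOn

variable (τ : Perm α) (p : α → Prop) [DecidablePred p] (hp : ∀ a, p (τ a) ↔ p a)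

def reverseOn : Perm α :=
  (τ.subtypePerm hp)⁻¹.subtypeCongr (τ.subtypePerm fun a => not_congr (hp a))

variable {τ p} {a : α}

theorem reverseOn_apply_of_pos (ha : p a) : reverseOn τ p hp a = τ⁻¹ a := by
  simp [reverseOn, subtypeCongr.left_apply _ _ ha]

theorem reverseOn_apply_of_neg (ha : ¬p a) : reverseOn τ p hp a = τ a := by
  simp [reverseOn, subtypeCongr.right_apply _ _ ha]

theorem sign_reverseOn [Fintype α] [DecidableEq α] : sign (reverseOn τ p hp) = sign τ := by
  have hτ : τ = (τ.subtypePerm hp).subtypeCongr (τ.subtypePerm fun a => not_congr (hp a)) :=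
    ext fun a => by by_cases ha : p a <;> simp [ha]
  rw [reverseOn, sign_subtypeCongr, sign_inv, ← sign_subtypeCongr, ← hτ]

end reverseOn

/-- A labelling `f` in this space selects the cycles of `τ` on which `f = 1` for reversal; cycles
of length at most two are excluded, since reversing them does nothing. -/
def reversalSpace (τ : Perm α) : Submodule (ZMod 2) (α → ZMod 2) where
  carrier := {f | (∀ a, f (τ a) = f a) ∧ ∀ a, τ (τ a) = a → f a = 0}
  add_mem' := by
    rintro f g ⟨hf, hf'⟩ ⟨hg, hg'⟩
    exact ⟨fun a => by simp [hf, hg], fun a ha => by simp [hf' a ha, hg' a ha]⟩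
  zero_mem' := by simp
  smul_mem' := by
    rintro c f ⟨hf, hf'⟩
    exact ⟨fun a => by simp [hf], fun a ha => by simp [hf' a ha]⟩

theorem mem_reversalSpace {τ : Perm α} {f : α → ZMod 2} :
    f ∈ τ.reversalSpace ↔ (∀ a, f (τ a) = f a) ∧ ∀ a, τ (τ a) = a → f a = 0 :=
  Iff.rfl

def reverseCycles (τ : Perm α) (f : τ.reversalSpace) : Perm α :=
  reverseOn τ (fun a => f.1 a = 1) fun a => by rw [(mem_reversalSpace.1 f.2).1 a]

section reverseCycles

variable {τ : Perm α} {f : τ.reversalSpace} {a : α}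

theorem reverseCycles_apply_of_eq_one (ha : f.1 a = 1) : τ.reverseCycles f a = τ⁻¹ a :=
  reverseOn_apply_of_pos _ ha

theorem reverseCycles_apply_of_ne_one (ha : f.1 a ≠ 1) : τ.reverseCycles f a = τ a :=
  reverseOn_apply_of_neg _ ha

theorem reverseCycles_injective : Function.Injective τ.reverseCycles := by
  intro f g hfg
  ext a
  have hfg_a : τ.reverseCycles f a = τ.reverseCycles g a := by rw [hfg]
  have h01 : ∀ x : ZMod 2, x ≠ 1 → x = 0 := by decide
  have hτ : τ⁻¹ a = τ a → τ (τ a) = a := fun h => by rw [← h]; simp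
  by_cases hfa : f.1 a = 1 <;> by_cases hga : g.1 a = 1
  · rw [hfa, hga]
  · rw [reverseCycles_apply_of_eq_one hfa, reverseCycles_apply_of_ne_one hga] at hfg_a
    simp [(mem_reversalSpace.1 f.2).2 a (hτ hfg_a)] at hfa
  · rw [reverseCycles_apply_of_ne_one hfa, reverseCycles_apply_of_eq_one hga] at hfg_a
    simp [(mem_reversalSpace.1 g.2).2 a (hτ hfg_a.symm)] at hga
  · rw [h01 _ hfa, h01 _ hga]

end reverseCycles

variable [Fintype α] {σ τ : Perm α}

noncomputable def edges (σ : Perm α) : Sym2 α →₀ ℕ := ∑ a, Finsupp.single s(a, σ a) 1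

theorem edges_inv (σ : Perm α) : σ⁻¹.edges = σ.edges := by
  rw [edges, ← Equiv.sum_comp σ]
  simp [edges, Sym2.eq_swap]

theorem edges_reverseOn (p : α → Prop) [DecidablePred p] (hp : ∀ a, p (τ a) ↔ p a) :
    (reverseOn τ p hp).edges = τ.edges := by
  rw [edges, ← Equiv.sum_comp (ofSubtype (τ.subtypePerm hp))]
  refine Finset.sum_congr rfl fun a _ => ?_
  by_cases ha : p a
  · rw [ofSubtype_apply_of_mem _ ha, subtypePerm_apply,
      reverseOn_apply_of_pos hp ((hp a).2 ha)]
    simp [Sym2.eq_swap]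
  · rw [ofSubtype_apply_of_not_mem _ ha, reverseOn_apply_of_neg hp ha]

theorem exists_mk_eq_of_edges_eq (h : σ.edges = τ.edges) (a : α) :
    ∃ b, s(b, τ b) = s(a, σ a) := by
  have ha : τ.edges s(a, σ a) ≠ 0 := by
    rw [← h, edges, Finsupp.finsetSum_apply]
    exact (Finset.sum_pos' (fun _ _ => Nat.zero_le _) ⟨a, mem_univ a, by simp⟩).ne'
  rw [edges, Finsupp.finsetSum_apply] at ha
  obtain ⟨b, -, hb⟩ := Finset.exists_ne_zero_of_sum_ne_zero ha
  exact ⟨b, (Finsupp.single_apply_ne_zero.1 hb).1.symm⟩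

theorem apply_eq_or_eq_inv_apply_of_edges_eq (h : σ.edges = τ.edges) (a : α) :
    σ a = τ a ∨ σ a = τ⁻¹ a := by
  obtain ⟨b, hb⟩ := exists_mk_eq_of_edges_eq h a
  rcases Sym2.eq_iff.1 hb with ⟨rfl, hb⟩ | ⟨rfl, hb⟩
  · exact Or.inl hb.symm
  · exact Or.inr (eq_inv_iff_eq.2 hb)

theorem apply_apply_ne_of_edges_eq (h : σ.edges = τ.edges) {a : α} (ha : σ a ≠ τ a) :
    σ (τ a) ≠ τ (τ a) := by
  intro hτa
  obtain ⟨b, hb⟩ := exists_mk_eq_of_edges_eq h.symm a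
  rcases Sym2.eq_iff.1 hb with ⟨rfl, hb⟩ | ⟨rfl, hb⟩
  · exact ha hb
  · have hσa : σ a = τ⁻¹ a := (apply_eq_or_eq_inv_apply_of_edges_eq h a).resolve_left ha
    rw [hτa] at hb
    exact ha (hσa.trans (inv_eq_iff_eq.2 hb.symm))

theorem apply_apply_eq_iff_of_edges_eq (h : σ.edges = τ.edges) (a : α) :
    σ (τ a) = τ (τ a) ↔ σ a = τ a := by
  refine ⟨not_imp_not.1 (apply_apply_ne_of_edges_eq h), fun ha => ?_⟩
  by_contra hτa
  -- the converse is the forward direction for `σ⁻¹` and `τ⁻¹`, at the point `τ (τ a)`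
  have h' : σ⁻¹.edges = τ⁻¹.edges := by rw [edges_inv, edges_inv, h]
  have key := apply_apply_ne_of_edges_eq h' (a := τ (τ a)) fun hc =>
    hτa (σ.symm_apply_eq.1 (by simpa using hc)).symm
  simp [Equiv.symm_apply_eq, ha] at key

variable [DecidableEq α]

theorem exists_reverseCycles_eq_iff :
    (∃ f, τ.reverseCycles f = σ) ↔ σ.edges = τ.edges := by
  refine ⟨fun ⟨f, hf⟩ => hf ▸ edges_reverseOn _ _, fun h => ?_⟩
  let f : α → ZMod 2 := fun a => if σ a = τ a then 0 else 1
  have hf : f ∈ τ.reversalSpace := by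
    refine ⟨fun a => by simp only [f, apply_apply_eq_iff_of_edges_eq h], fun a ha => ?_⟩
    have hτa : τ⁻¹ a = τ a := by rw [Perm.inv_eq_iff_eq, ha]
    simp [f, (apply_eq_or_eq_inv_apply_of_edges_eq h a).elim id (·.trans hτa)]
  refine ⟨⟨f, hf⟩, ext fun a => ?_⟩
  by_cases ha : σ a = τ a
  · rw [reverseCycles_apply_of_ne_one (by simp [f, ha]), ha]
  · rw [reverseCycles_apply_of_eq_one (by simp [f, ha]),
      (apply_eq_or_eq_inv_apply_of_edges_eq h a).resolve_left ha]

theorem card_edges_eq (τ : Perm α) :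
    #{σ : Perm α | σ.edges = τ.edges} = 2 ^ Module.finrank (ZMod 2) τ.reversalSpace := by
  have hrange : Set.range τ.reverseCycles = {σ | σ.edges = τ.edges} :=
    Set.ext fun σ => exists_reverseCycles_eq_iff
  have hcard := Module.natCard_eq_pow_finrank (K := ZMod 2) (V := τ.reversalSpace)
  rw [Nat.card_zmod, ← Nat.card_range_of_injective reverseCycles_injective, hrange,
    Nat.card_coe_set_eq, Set.ncard_eq_toFinset_card'] at hcard
  simpa using hcard

theorem sum_sign_edges_eq (τ : Perm α) :
    ∑ σ : Perm α with σ.edges = τ.edges, (sign σ : ℤ) =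
      sign τ * 2 ^ Module.finrank (ZMod 2) τ.reversalSpace := by
  have hsign : ∀ σ ∈ ({σ | σ.edges = τ.edges} : Finset (Perm α)), (sign σ : ℤ) = sign τ := by
    intro σ hσ
    obtain ⟨f, rfl⟩ := exists_reverseCycles_eq_iff.2 (mem_filter.1 hσ).2
    rw [reverseCycles, sign_reverseOn]
  rw [sum_congr rfl hsign, sum_const, card_edges_eq, nsmul_eq_mul, mul_comm]
  norm_cast

end Equiv.Perm

section GenericSymmetricMatrix

open Equiv

variable {ι : Type*} [Fintype ι] [LinearOrder ι]

noncomputable def Equiv.Perm.sortedEdges (σ : Perm ι) : ι × ι →₀ ℕ :=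
  ∑ j, Finsupp.single (min j (σ j), max j (σ j)) 1

theorem Equiv.Perm.sortedEdges_eq_mapDomain (σ : Perm ι) :
    σ.sortedEdges = σ.edges.mapDomain fun e => (Sym2.sortEquiv e : ι × ι) := by
  simp [Perm.sortedEdges, Perm.edges, Finsupp.mapDomain_finsetSum, Finsupp.mapDomain_single]

theorem Equiv.Perm.sortedEdges_eq_iff {σ τ : Perm ι} :
    σ.sortedEdges = τ.sortedEdges ↔ σ.edges = τ.edges := by
  simp only [Perm.sortedEdges_eq_mapDomain]
  exact (Finsupp.mapDomain_injective
    (Subtype.val_injective.comp Sym2.sortEquiv.injective)).eq_iff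

variable {N : Matrix ι ι (MvPolynomial (ι × ι) ℤ)}

theorem prod_apply_eq_monomial_sortedEdges (hN : ∀ i j, N i j = X (min i j, max i j))
    (σ : Perm ι) : ∏ i, N (σ i) i = monomial σ.sortedEdges 1 := by
  simp only [Perm.sortedEdges, monomial_sum_one, hN, min_comm (σ _), max_comm (σ _)]
  rfl

theorem coeff_det_eq_sum_sign (hN : ∀ i j, N i j = X (min i j, max i j)) (m : ι × ι →₀ ℕ) :
    coeff m N.det = ∑ σ : Perm ι with σ.sortedEdges = m, (Perm.sign σ : ℤ) := by
  simp only [Matrix.det_apply, prod_apply_eq_monomial_sortedEdges hN, coeff_sum, Units.smul_def,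
    coeff_smul, coeff_monomial, sum_filter, Int.zsmul_eq_mul, mul_ite, mul_one, mul_zero]

theorem coeff_sortedEdges_det (hN : ∀ i j, N i j = X (min i j, max i j)) (τ : Perm ι) :
    coeff τ.sortedEdges N.det =
      Perm.sign τ * 2 ^ Module.finrank (ZMod 2) τ.reversalSpace := by
  simp only [coeff_det_eq_sum_sign hN, Perm.sortedEdges_eq_iff, Perm.sum_sign_edges_eq]

theorem coeff_det_eq_zero_of_forall_sortedEdges_ne (hN : ∀ i j, N i j = X (min i j, max i j))
    {m : ι × ι →₀ ℕ} (hm : ∀ σ : Perm ι, σ.sortedEdges ≠ m) : coeff m N.det = 0 := by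
  simp [coeff_det_eq_sum_sign hN, hm]

end GenericSymmetricMatrix

theorem stmt8_general (r : ℕ)
    (N : Matrix (Fin r) (Fin r) (MvPolynomial (Fin r × Fin r) ℤ))
    (hN : ∀ i j, N i j = X (min i j, max i j)) :
    (∀ m : (Fin r × Fin r) →₀ ℕ, coeff m N.det ≠ 0 →
        ∃ k : ℕ, coeff m N.det = 2 ^ k ∨ coeff m N.det = -(2 ^ k)) ∧
    (∀ u : Equiv.Perm (Fin r),
        coeff (∑ j : Fin r, Finsupp.single (min j (u j), max j (u j)) 1) N.det ≠ 0) := by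
  refine ⟨fun m hm => ?_, fun u => ?_⟩
  · obtain ⟨τ, rfl⟩ : ∃ τ : Equiv.Perm (Fin r), τ.sortedEdges = m := by
      by_contra! h
      exact hm (coeff_det_eq_zero_of_forall_sortedEdges_ne hN h)
    refine ⟨Module.finrank (ZMod 2) τ.reversalSpace, ?_⟩
    rw [coeff_sortedEdges_det hN]
    rcases Int.units_eq_one_or (Equiv.Perm.sign τ) with h | h <;> simp [h]
  · exact (coeff_sortedEdges_det hN u).trans_ne (by simp)

/-- Every nonzero coefficient of the determinant of the generic symmetric matrix
`N` (with `N i j = x_{min(i,j), max(i,j)}`) over `ℤ` is `±2^k`; in particular,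
for every permutation `u` the monomial `∏ j, N j (u j)` appears in `det N` with
nonzero coefficient. -/
theorem stmt8 (r : ℕ) (hr : 1 ≤ r)
    (N : Matrix (Fin r) (Fin r) (MvPolynomial (Fin r × Fin r) ℤ))
    (hN : ∀ i j, N i j = X (min i j, max i j)) :
    (∀ m : (Fin r × Fin r) →₀ ℕ, coeff m N.det ≠ 0 →
        ∃ k : ℕ, coeff m N.det = 2 ^ k ∨ coeff m N.det = -(2 ^ k)) ∧
    (∀ u : Equiv.Perm (Fin r),
        coeff (∑ j : Fin r, Finsupp.single (min j (u j), max j (u j)) 1) N.det ≠ 0) :=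
  stmt8_general r N hN
end

section
/- Let r ≥ 1, let {x_{ij} : 1 ≤ i ≤ j ≤ r} be independent commuting indeterminates, and let N be the r×r matrix with N_{ij} = x_{min(i,j), max(i,j)}. If u, u' ∈ S_r satisfy ∏_{j=1}^r N_{j, u(j)} = ∏_{j=1}^r N_{j, u'(j)} as monomials, then sgn(u) = sgn(u'). -/
/-!
The monomial `∏ j, N j (u j)` records the multiset of unordered pairs `{j, u j}`, that is, the
undirected graph of `u`. The orbits of a permutation are the connected components of its graph,
so `u` and `u'` have the same orbits (`u'` runs through each cycle of `u` in one direction or the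
other). Hence they have the same support and the same number of cycles, and these two numbers
determine the sign.
-/

open Finset

namespace Finset

variable {α β γ : Type*} [DecidableEq β] [DecidableEq γ] {s : Finset α} {f : α → β}

theorem card_image_eq_card_image_pair (g : α → γ)
    (h : ∀ a ∈ s, ∀ b ∈ s, f a = f b → g a = g b) :
    #(s.image f) = #(s.image fun a => (f a, g a)) := by
  have : s.image f = (s.image fun a => (f a, g a)).image Prod.fst := by
    rw [image_image]; rfl
  rw [this]
  refine card_image_of_injOn ?_
  rw [coe_image]
  rintro _ ⟨a, ha, rfl⟩ _ ⟨b, hb, rfl⟩ (hab : f a = f b)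
  simp [hab, h a ha b hb hab]

theorem card_image_eq_card_image_of_eq_iff {g : α → γ}
    (h : ∀ a ∈ s, ∀ b ∈ s, f a = f b ↔ g a = g b) :
    #(s.image f) = #(s.image g) := by
  rw [card_image_eq_card_image_pair g fun a ha b hb => (h a ha b hb).1,
    card_image_eq_card_image_pair f fun a ha b hb => (h a ha b hb).2,
    ← card_image_of_injective _ Prod.swap_injective, image_image]
  rfl

end Finset

theorem Sym2.mk_min_max {α : Type*} [LinearOrder α] (a b : α) :
    s(min a b, max a b) = s(a, b) :=
  Sym2.sortEquiv.symm_apply_apply s(a, b)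

theorem MvPolynomial.map_univ_eq_of_prod_X_eq {σ R ι : Type*} [CommSemiring R] [Nontrivial R]
    [Fintype ι] {e e' : ι → σ}
    (h : ∏ j, (X (e j) : MvPolynomial σ R) = ∏ j, X (e' j)) :
    univ.val.map e = univ.val.map e' := by
  classical
  have toMultiset_exponent : ∀ e : ι → σ,
      Finsupp.toMultiset (∑ j, Finsupp.single (e j) 1) = univ.val.map e := fun e => by
    simp only [Finsupp.toMultiset_sum, Finsupp.toMultiset_single, one_nsmul]
    rw [sum_eq_multiset_sum, ← Multiset.sum_map_singleton (univ.val.map e), Multiset.map_map]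
    rfl
  simp only [X, ← monomial_sum_one] at h
  rw [← toMultiset_exponent, ← toMultiset_exponent, monomial_left_injective one_ne_zero h]

namespace Equiv.Perm

variable {α : Type*} {σ τ : Perm α}

theorem SameCycle.of_forall_sameCycle_apply (h : ∀ x, τ.SameCycle x (σ x)) {a b : α}
    (hab : σ.SameCycle a b) : τ.SameCycle a b := by
  obtain ⟨i, rfl⟩ := hab
  induction i using Int.induction_on with
  | zero => exact SameCycle.refl _ _
  | succ i ih => rw [add_comm, zpow_one_add, mul_apply]; exact ih.trans (h _)
  | pred i ih =>
    have hσ : σ ((σ ^ (-(i : ℤ) - 1)) a) = (σ ^ (-(i : ℤ))) a := by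
      rw [← mul_apply, ← zpow_one_add, add_sub_cancel]
    exact ih.trans (hσ ▸ h _).symm

theorem sameCycle_apply_of_mem_range_sym2 {x : α} (hx : s(x, σ x) ∈ Set.range fun y => s(y, τ y)) :
    τ.SameCycle x (σ x) := by
  obtain ⟨y, hy⟩ := hx
  rcases Sym2.eq_iff.1 hy with ⟨hyx, hτ⟩ | ⟨hyx, hτ⟩
  · rw [← hτ, ← hyx]
    exact sameCycle_apply_right.2 (.refl _ _)
  · rw [← hyx]
    nth_rw 1 [← hτ]
    exact sameCycle_apply_left.2 (.refl _ _)

theorem sameCycle_iff_of_range_sym2_eq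
    (h : (Set.range fun x => s(x, σ x)) = Set.range fun x => s(x, τ x)) {a b : α} :
    σ.SameCycle a b ↔ τ.SameCycle a b :=
  ⟨.of_forall_sameCycle_apply fun x => sameCycle_apply_of_mem_range_sym2 (h ▸ ⟨x, rfl⟩),
    .of_forall_sameCycle_apply fun x => sameCycle_apply_of_mem_range_sym2 (h ▸ ⟨x, rfl⟩)⟩

theorem apply_eq_self_of_sameCycle_imp (h : ∀ a b, τ.SameCycle a b → σ.SameCycle a b) {x : α}
    (hx : σ x = x) : τ x = x :=
  ((h x (τ x) (sameCycle_apply_right.2 (.refl _ _))).eq_of_left hx).symm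

variable [Fintype α] [DecidableEq α]

theorem support_eq_of_sameCycle_iff (h : ∀ a b, σ.SameCycle a b ↔ τ.SameCycle a b) :
    σ.support = τ.support := by
  ext x
  rw [mem_support, mem_support, not_iff_not]
  exact ⟨apply_eq_self_of_sameCycle_imp fun a b => (h a b).2,
    apply_eq_self_of_sameCycle_imp fun a b => (h a b).1⟩

theorem cycleFactorsFinset_eq_image_cycleOf (σ : Perm α) :
    σ.cycleFactorsFinset = σ.support.image σ.cycleOf := by
  ext c
  rw [mem_image]
  constructor
  · intro hc
    obtain ⟨x, hx⟩ := (mem_cycleFactorsFinset_iff.1 hc).1.nonempty_support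
    exact ⟨x, mem_cycleFactorsFinset_support_le hc hx, (cycle_is_cycleOf hx hc).symm⟩
  · rintro ⟨x, hx, rfl⟩
    exact cycleOf_mem_cycleFactorsFinset_iff.2 hx

theorem card_cycleFactorsFinset_eq_of_sameCycle_iff
    (h : ∀ a b, σ.SameCycle a b ↔ τ.SameCycle a b) :
    #σ.cycleFactorsFinset = #τ.cycleFactorsFinset := by
  have hsupp := support_eq_of_sameCycle_iff h
  rw [cycleFactorsFinset_eq_image_cycleOf, cycleFactorsFinset_eq_image_cycleOf, ← hsupp]
  refine card_image_eq_card_image_of_eq_iff fun a ha b hb => ?_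
  rw [← sameCycle_iff_cycleOf_eq_of_mem_support ha hb,
    ← sameCycle_iff_cycleOf_eq_of_mem_support (hsupp ▸ ha) (hsupp ▸ hb), h]

theorem sign_eq_of_sameCycle_iff (h : ∀ a b, σ.SameCycle a b ↔ τ.SameCycle a b) :
    sign σ = sign τ := by
  have card_cycleType : ∀ π : Perm α, Multiset.card π.cycleType = #π.cycleFactorsFinset :=
    fun π => by rw [cycleType_def, Multiset.card_map]; rfl
  rw [sign_of_cycleType, sign_of_cycleType, sum_cycleType, sum_cycleType, card_cycleType,
    card_cycleType, support_eq_of_sameCycle_iff h, card_cycleFactorsFinset_eq_of_sameCycle_iff h]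

theorem sign_eq_of_range_sym2_eq
    (h : (Set.range fun x => s(x, σ x)) = Set.range fun x => s(x, τ x)) :
    sign σ = sign τ :=
  sign_eq_of_sameCycle_iff fun _ _ => sameCycle_iff_of_range_sym2_eq h

end Equiv.Perm

theorem stmt9_general (r : ℕ)
    (N : Matrix (Fin r) (Fin r) (MvPolynomial (Fin r × Fin r) ℤ))
    (hN : ∀ i j, N i j = MvPolynomial.X (min i j, max i j))
    (u u' : Equiv.Perm (Fin r))
    (h : ∏ j : Fin r, N j (u j) = ∏ j : Fin r, N j (u' j)) :
    Equiv.Perm.sign u = Equiv.Perm.sign u' := by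
  simp only [hN] at h
  have hpairs := MvPolynomial.map_univ_eq_of_prod_X_eq h
  refine Equiv.Perm.sign_eq_of_range_sym2_eq (Set.ext fun p => ?_)
  simpa [Sym2.mk_min_max] using congrArg (fun m => p ∈ m.map fun q => s(q.1, q.2)) hpairs

/-- For the generic symmetric matrix `N i j = x_{min(i,j), max(i,j)}` over `ℤ`,
if two permutations `u, u'` yield the same monomial `∏ j, N j (u j)`, then they
have the same sign. -/
theorem stmt9 (r : ℕ) (hr : 1 ≤ r)
    (N : Matrix (Fin r) (Fin r) (MvPolynomial (Fin r × Fin r) ℤ))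
    (hN : ∀ i j, N i j = MvPolynomial.X (min i j, max i j))
    (u u' : Equiv.Perm (Fin r))
    (h : ∏ j : Fin r, N j (u j) = ∏ j : Fin r, N j (u' j)) :
    Equiv.Perm.sign u = Equiv.Perm.sign u' :=
  stmt9_general r N hN u u' h
end
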